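/- Under the hypotheses of the projection theorem (Jones' conditions with constant κ_J), the composition Q ∘ B is the identity on SL^∞, where B f = Σ_I (⟨f,h_I⟩/‖h_I‖₂²) b_I and Q f = Σ_I (⟨f,b_I⟩/‖b_I‖₂²) h_I. Consequently P = B Q is a bounded projection of norm at most κ_J^{1/2}, the range of B is complemented in SL^∞, and B is an isomorphism onto its range. -/

import Mathlib

/- Setup: dyadic intervals on [0,1), L^∞-normalized Haar coefficients, the SL^∞
square-function norm, the dyadic H^1 norm, and the L² pairing, all expressed on
the space `Dy → ℝ` of Haar coefficient sequences. -/

open MeasureTheory Filter ENNReal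

noncomputable section

/-- Dyadic intervals, encoded as pairs (n, k) with k < 2^n. -/
abbrev Dy := {p : ℕ × ℕ // p.2 < 2 ^ p.1}

/-- The level (frequency) of a dyadic interval. -/
def dlev (I : Dy) : ℕ := I.val.1

/-- The dyadic interval [k/2^n, (k+1)/2^n) as a subset of ℝ. -/
def dint (I : Dy) : Set ℝ :=
  Set.Ico ((I.val.2 : ℝ) / 2 ^ I.val.1) ((I.val.2 + 1 : ℝ) / 2 ^ I.val.1)

/-- The length |I| = 2^{-n} of a dyadic interval. -/
def dlen (I : Dy) : ℝ := ((2 : ℝ) ^ I.val.1)⁻¹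

/-- The square function (Σ_I a_I² 1_I(x)) of the Haar series with coefficients `a`. -/
def sqFn (a : Dy → ℝ) (x : ℝ) : ℝ≥0∞ :=
  ∑' I : Dy, Set.indicator (dint I) (fun _ => ENNReal.ofReal ((a I) ^ 2)) x

/-- The SL^∞ norm: ‖Σ a_I h_I‖ = sup_x (Σ a_I² 1_I(x))^{1/2}. -/
def slNorm (a : Dy → ℝ) : ℝ≥0∞ := ⨆ x : ℝ, sqFn a x ^ (1 / 2 : ℝ)

/-- The dyadic H^1 norm: ∫₀¹ (Σ a_I² 1_I(x))^{1/2} dx. -/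
def h1Norm (a : Dy → ℝ) : ℝ≥0∞ := ∫⁻ x in Set.Ico (0 : ℝ) 1, sqFn a x ^ (1 / 2 : ℝ)

/-- The L² pairing ⟨f, g⟩ = Σ_I a_I b_I |I| of two Haar series. -/
def pairing (a b : Dy → ℝ) : ℝ := ∑' I : Dy, a I * b I * dlen I


open scoped ENNReal

/-- The set B_I = ⋃_{K ∈ ℬ_I} K for a collection ℬ_I of dyadic intervals. -/
def unionBD (ℬ : Dy → Set Dy) (I : Dy) : Set ℝ := ⋃ K ∈ ℬ I, dint K

/-- Jones' compatibility conditions (J1)–(J4) with constant κ for a family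
(ℬ_I : I ∈ ℐ) of collections of dyadic intervals. -/
def JonesD (κ : ℝ≥0∞) (ℐ : Set Dy) (ℬ : Dy → Set Dy) : Prop :=
  -- (J1): finitely many building blocks (dyadic intervals are automatically
  -- measurable, nested and of positive measure).
  (Set.Finite (⋃ I ∈ ℐ, ℬ I)) ∧
  -- (J2): each ℬ_I is nonempty with pairwise disjoint members; distinct
  -- collections are disjoint.
  (∀ I ∈ ℐ, (ℬ I).Nonempty) ∧
  (∀ I ∈ ℐ, (ℬ I).Pairwise fun K K' => Disjoint (dint K) (dint K')) ∧
  (∀ I₀ ∈ ℐ, ∀ I₁ ∈ ℐ, I₀ ≠ I₁ → Disjoint (ℬ I₀) (ℬ I₁)) ∧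
  -- (J3):
  (∀ I₀ ∈ ℐ, ∀ I₁ ∈ ℐ, Disjoint (dint I₀) (dint I₁) →
    Disjoint (unionBD ℬ I₀) (unionBD ℬ I₁)) ∧
  (∀ I₀ ∈ ℐ, ∀ I₁ ∈ ℐ, dint I₀ ⊆ dint I₁ → unionBD ℬ I₀ ⊆ unionBD ℬ I₁) ∧
  -- (J4):
  (∀ I₀ ∈ ℐ, ∀ I ∈ ℐ, dint I₀ ⊆ dint I → ∀ K ∈ ℬ I,
    κ⁻¹ * (MeasureTheory.volume (unionBD ℬ I₀) / MeasureTheory.volume (unionBD ℬ I))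
      ≤ MeasureTheory.volume (dint K ∩ unionBD ℬ I₀) / MeasureTheory.volume (dint K))

/-- The Haar coefficients of B f = Σ_{I ∈ ℐ} (⟨f, h_I⟩/‖h_I‖₂²) b_I, where
b_I = Σ_{K ∈ ℬ_I} h_K: the coefficient of h_K is a_I for the (unique) I ∈ ℐ
with K ∈ ℬ_I. -/
def Bop (ℐ : Set Dy) (ℬ : Dy → Set Dy) (a : Dy → ℝ) : Dy → ℝ :=
  fun K => ∑' I : {I : Dy // I ∈ ℐ ∧ K ∈ ℬ I}, a I.val

/-- The Haar coefficients of Q f = Σ_{I ∈ ℐ} (⟨f, b_I⟩/‖b_I‖₂²) h_I: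
the coefficient of h_I (I ∈ ℐ) is (Σ_{K ∈ ℬ_I} a_K |K|) / (Σ_{K ∈ ℬ_I} |K|). -/
def Qop (ℐ : Set Dy) (ℬ : Dy → Set Dy) (a : Dy → ℝ) : Dy → ℝ :=
  fun I => Set.indicator ℐ
    (fun _ => (∑' K : ℬ I, a K.val * dlen K.val) / (∑' K : ℬ I, dlen K.val)) I

/-! Q ∘ B = id because B puts the coefficient `a I` on every `K ∈ ℬ I` and Q averages over `ℬ I`.
The norm bounds are pointwise bounds on square functions. For B: the `I` with `x ∈ B_I` form a
chain by (J3), so `∑ c_I²` is at most the square function of `c` at a point of the smallest of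
them. For Q: the `I ∈ ℐ` containing `x` form a chain with smallest member `I₀`. By Jensen,
`(Q a)_I² |B_I| ≤ ∑_{K ∈ ℬ_I} a_K² |K|`, and (J4) trades `|K|` for
`κ |B_I| |K ∩ B_{I₀}| / |B_{I₀}|`; as the `ℬ_I` are disjoint, the sum over `I` is at most
`κ / |B_{I₀}| ∫_{B_{I₀}} S(a)² ≤ κ ‖a‖²`. -/

open scoped Classical

lemma dlen_pos (I : Dy) : 0 < dlen I := by unfold dlen; positivity

lemma volume_dint (I : Dy) : volume (dint I) = ENNReal.ofReal (dlen I) := by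
  rw [dint, Real.volume_Ico, dlen]
  congr 1
  ring

lemma measurableSet_dint (I : Dy) : MeasurableSet (dint I) := measurableSet_Ico

lemma dint_nonempty (I : Dy) : (dint I).Nonempty :=
  Set.nonempty_Ico.2 (div_lt_div_of_pos_right (lt_add_one _) (by positivity))

lemma mem_dint_iff {I : Dy} {x : ℝ} :
    x ∈ dint I ↔ 0 ≤ x ∧ ⌊x * 2 ^ dlev I⌋₊ = I.val.2 := by
  have h2 : (0 : ℝ) < 2 ^ I.val.1 := by positivity
  constructor
  · rintro ⟨hl, hr⟩
    have hx : 0 ≤ x := le_trans (by positivity) hl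
    refine ⟨hx, (Nat.floor_eq_iff (by positivity)).2 ⟨?_, ?_⟩⟩
    · exact (div_le_iff₀ h2).1 hl
    · exact (lt_div_iff₀ h2).1 hr
  · rintro ⟨hx, hfl⟩
    obtain ⟨hl, hr⟩ := (Nat.floor_eq_iff (by positivity)).1 hfl
    exact ⟨(div_le_iff₀ h2).2 hl, (lt_div_iff₀ h2).2 hr⟩

lemma floor_mul_two_pow_of_le (x : ℝ) {m n : ℕ} (hmn : m ≤ n) :
    ⌊x * 2 ^ m⌋₊ = ⌊x * 2 ^ n⌋₊ / 2 ^ (n - m) := by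
  have h2 : (2 : ℝ) ^ n / 2 ^ (n - m) = 2 ^ m := by
    rw [div_eq_iff (by positivity), ← pow_add, Nat.add_sub_cancel' hmn]
  rw [← Nat.floor_div_natCast, Nat.cast_pow, Nat.cast_ofNat, mul_div_assoc, h2]

lemma dint_subset_of_dlev_le {I J : Dy} (hle : dlev J ≤ dlev I)
    (hIJ : ¬Disjoint (dint I) (dint J)) : dint I ⊆ dint J := by
  obtain ⟨z, hzI, hzJ⟩ := Set.not_disjoint_iff.1 hIJ
  rw [mem_dint_iff] at hzI hzJ
  intro x hx
  rw [mem_dint_iff] at hx ⊢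
  refine ⟨hx.1, ?_⟩
  rw [floor_mul_two_pow_of_le x hle, hx.2, ← hzI.2, ← floor_mul_two_pow_of_le z hle, hzJ.2]

lemma exists_dint_subset_of_not_disjoint (s : Finset Dy) (hs : s.Nonempty)
    (hch : ∀ I ∈ s, ∀ J ∈ s, ¬Disjoint (dint I) (dint J)) :
    ∃ I₀ ∈ s, ∀ I ∈ s, dint I₀ ⊆ dint I := by
  obtain ⟨I₀, hI₀, hmax⟩ := s.exists_max_image dlev hs
  exact ⟨I₀, hI₀, fun I hI => dint_subset_of_dlev_le (hmax I hI) (hch I₀ hI₀ I hI)⟩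

lemma slNorm_le_iff {a : Dy → ℝ} {C : ℝ≥0∞} : slNorm a ≤ C ↔ ∀ x, sqFn a x ≤ C ^ 2 := by
  simp only [slNorm, iSup_le_iff, one_div, ENNReal.rpow_inv_le_iff two_pos, ENNReal.rpow_two]

lemma sqFn_le_slNorm_sq (a : Dy → ℝ) (x : ℝ) : sqFn a x ≤ slNorm a ^ 2 :=
  slNorm_le_iff.1 le_rfl x

lemma sqFn_eq_sum (a : Dy → ℝ) (s : Finset Dy) (ha : ∀ I ∉ s, a I = 0) (x : ℝ) :
    sqFn a x = ∑ I ∈ s with x ∈ dint I, ENNReal.ofReal (a I ^ 2) := by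
  rw [sqFn, tsum_eq_sum (s := s) (fun I hI => by simp [ha I hI]), Finset.sum_filter]
  simp only [Set.indicator_apply]

lemma sum_ofReal_sq_le_sqFn (a : Dy → ℝ) (s : Finset Dy) {y : ℝ} (hy : ∀ I ∈ s, y ∈ dint I) :
    ∑ I ∈ s, ENNReal.ofReal (a I ^ 2) ≤ sqFn a y := by
  calc ∑ I ∈ s, ENNReal.ofReal (a I ^ 2)
      = ∑ I ∈ s, (dint I).indicator (fun _ => ENNReal.ofReal (a I ^ 2)) y :=
        Finset.sum_congr rfl fun I hI =>
          (Set.indicator_of_mem (hy I hI) fun _ => ENNReal.ofReal (a I ^ 2)).symm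
    _ ≤ sqFn a y := ENNReal.sum_le_tsum s

lemma sum_ofReal_sq_le_slNorm_sq (a : Dy → ℝ) (s : Finset Dy)
    (hch : ∀ I ∈ s, ∀ J ∈ s, ¬Disjoint (dint I) (dint J)) :
    ∑ I ∈ s, ENNReal.ofReal (a I ^ 2) ≤ slNorm a ^ 2 := by
  rcases s.eq_empty_or_nonempty with rfl | hs
  · simp
  obtain ⟨I₀, -, hmin⟩ := exists_dint_subset_of_not_disjoint s hs hch
  obtain ⟨y, hy⟩ := dint_nonempty I₀
  exact (sum_ofReal_sq_le_sqFn a s fun I hI => hmin I hI hy).trans (sqFn_le_slNorm_sq a y)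

lemma eq_zero_of_slNorm_eq_zero {a : Dy → ℝ} (ha : slNorm a = 0) : a = 0 := by
  funext I
  obtain ⟨y, hy⟩ := dint_nonempty I
  have hle := (sum_ofReal_sq_le_sqFn a {I} (by simpa using hy)).trans (sqFn_le_slNorm_sq a y)
  rw [ha, Finset.sum_singleton] at hle
  simpa using hle

lemma sq_div_sum_mul_sum_le {ι : Type*} (s : Finset ι) (a w : ι → ℝ) (hw : ∀ i ∈ s, 0 < w i) :
    ((∑ i ∈ s, a i * w i) / ∑ i ∈ s, w i) ^ 2 * ∑ i ∈ s, w i ≤ ∑ i ∈ s, a i ^ 2 * w i := by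
  have hCS := Finset.sq_sum_div_le_sum_sq_div s (fun i => a i * w i) hw
  have hterm : ∑ i ∈ s, (a i * w i) ^ 2 / w i = ∑ i ∈ s, a i ^ 2 * w i :=
    Finset.sum_congr rfl fun i hi => by field_simp [(hw i hi).ne']
  rw [hterm] at hCS
  rcases eq_or_ne (∑ i ∈ s, w i) 0 with hW | hW
  · rw [hW, mul_zero]
    exact Finset.sum_nonneg fun i hi => mul_nonneg (sq_nonneg _) (hw i hi).le
  · calc _ = (∑ i ∈ s, a i * w i) ^ 2 / ∑ i ∈ s, w i := by field_simp
      _ ≤ _ := hCS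

lemma sum_ofReal_sq_mul_volume_inter_le (a : Dy → ℝ) (t : Finset Dy) (U : Set ℝ) :
    ∑ K ∈ t, ENNReal.ofReal (a K ^ 2) * volume (dint K ∩ U) ≤ slNorm a ^ 2 * volume U := by
  calc ∑ K ∈ t, ENNReal.ofReal (a K ^ 2) * volume (dint K ∩ U)
      = ∫⁻ y in U, ∑ K ∈ t, (dint K).indicator (fun _ => ENNReal.ofReal (a K ^ 2)) y := by
        rw [lintegral_finsetSum _ fun K _ => measurable_const.indicator (measurableSet_dint K)]
        refine Finset.sum_congr rfl fun K _ => ?_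
        rw [lintegral_indicator_const (measurableSet_dint K),
          Measure.restrict_apply (measurableSet_dint K)]
    _ ≤ ∫⁻ y in U, sqFn a y := lintegral_mono fun y => ENNReal.sum_le_tsum t
    _ ≤ ∫⁻ _ in U, slNorm a ^ 2 := lintegral_mono fun y => sqFn_le_slNorm_sq a y
    _ = slNorm a ^ 2 * volume U := setLIntegral_const U _

namespace JonesD

variable {κ : ℝ≥0∞} {ℐ : Set Dy} {ℬ : Dy → Set Dy}

/-- `ℬ I` as a finset, for `I ∈ ℐ`. -/
def blocks (h : JonesD κ ℐ ℬ) (I : Dy) : Finset Dy := h.1.toFinset.filter (· ∈ ℬ I)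

lemma Bop_apply_of_forall_notMem {a : Dy → ℝ} {K : Dy} (hK : ∀ I ∈ ℐ, K ∉ ℬ I) :
    Bop ℐ ℬ a K = 0 := by
  have : IsEmpty {I : Dy // I ∈ ℐ ∧ K ∈ ℬ I} := ⟨fun ⟨I, hI, hKI⟩ => hK I hI hKI⟩
  exact tsum_empty

lemma Qop_apply_of_notMem {a : Dy → ℝ} {I : Dy} (hI : I ∉ ℐ) : Qop ℐ ℬ a I = 0 :=
  Set.indicator_of_notMem hI _

variable (h : JonesD κ ℐ ℬ)
include h

lemma coe_blocks {I : Dy} (hI : I ∈ ℐ) : (h.blocks I : Set Dy) = ℬ I := by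
  ext K
  simp only [blocks, Finset.coe_filter, Set.Finite.mem_toFinset, Set.mem_ofPred_eq,
    and_iff_right_iff_imp]
  exact fun hK => Set.mem_biUnion hI hK

lemma unionBD_eq {I : Dy} (hI : I ∈ ℐ) : unionBD ℬ I = ⋃ K ∈ h.blocks I, dint K := by
  rw [unionBD, ← h.coe_blocks hI, Finset.set_biUnion_coe]

lemma eq_of_mem_of_mem {I₀ I₁ K : Dy} (hI₀ : I₀ ∈ ℐ) (hI₁ : I₁ ∈ ℐ) (hK₀ : K ∈ ℬ I₀)
    (hK₁ : K ∈ ℬ I₁) : I₀ = I₁ := by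
  obtain ⟨-, -, -, hdisj, -⟩ := h
  by_contra hne
  exact Set.disjoint_left.1 (hdisj I₀ hI₀ I₁ hI₁ hne) hK₀ hK₁

/-- `I ↦ ℬ I` is injective on `ℐ` with values in the subsets of a finite set. -/
lemma finite_index : ℐ.Finite := by
  refine Set.Finite.of_finite_image (f := ℬ) (h.1.finite_subsets.subset ?_) ?_
  · rintro _ ⟨I, hI, rfl⟩
    exact Set.subset_biUnion_of_mem (u := ℬ) hI
  · intro I hI J hJ hIJ
    obtain ⟨K, hK⟩ := h.2.1 I hI
    exact h.eq_of_mem_of_mem hI hJ hK (hIJ ▸ hK)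

lemma pairwiseDisjoint_blocks : ℐ.PairwiseDisjoint h.blocks := by
  intro I hI J hJ hne
  simp only [Function.onFun, blocks]
  rw [Finset.disjoint_filter]
  exact fun K _ hKI hKJ => hne (h.eq_of_mem_of_mem hI hJ hKI hKJ)

lemma pairwiseDisjoint_dint {I : Dy} (hI : I ∈ ℐ) :
    (h.blocks I : Set Dy).PairwiseDisjoint dint := by
  rw [h.coe_blocks hI]
  obtain ⟨-, -, hdisj, -⟩ := h
  exact hdisj I hI

lemma volume_unionBD {I : Dy} (hI : I ∈ ℐ) :
    volume (unionBD ℬ I) = ENNReal.ofReal (∑ K ∈ h.blocks I, dlen K) := by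
  rw [h.unionBD_eq hI, measure_biUnion_finset (h.pairwiseDisjoint_dint hI)
    fun K _ => measurableSet_dint K, ENNReal.ofReal_sum_of_nonneg fun K _ => (dlen_pos K).le]
  exact Finset.sum_congr rfl fun K _ => volume_dint K

lemma sum_dlen_pos {I : Dy} (hI : I ∈ ℐ) : 0 < ∑ K ∈ h.blocks I, dlen K := by
  obtain ⟨K, hK⟩ := h.2.1 I hI
  exact Finset.sum_pos (fun K _ => dlen_pos K) ⟨K, by rwa [← Finset.mem_coe, h.coe_blocks hI]⟩

lemma volume_unionBD_ne_zero {I : Dy} (hI : I ∈ ℐ) : volume (unionBD ℬ I) ≠ 0 := by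
  rw [h.volume_unionBD hI]
  exact (ENNReal.ofReal_pos.2 (h.sum_dlen_pos hI)).ne'

lemma volume_unionBD_ne_top {I : Dy} (hI : I ∈ ℐ) : volume (unionBD ℬ I) ≠ ⊤ := by
  rw [h.volume_unionBD hI]
  exact ENNReal.ofReal_ne_top

/-- Jones' condition (J4) with the denominators cleared. -/
lemma volume_mul_volume_le (hκ : κ ≠ ⊤) {I₀ I K : Dy} (hI₀ : I₀ ∈ ℐ) (hI : I ∈ ℐ)
    (hsub : dint I₀ ⊆ dint I) (hK : K ∈ ℬ I) :
    volume (unionBD ℬ I₀) * volume (dint K)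
      ≤ κ * volume (unionBD ℬ I) * volume (dint K ∩ unionBD ℬ I₀) := by
  have ⟨_, _, _, _, _, _, hJ4⟩ := h
  specialize hJ4 I₀ hI₀ I hI hsub K hK
  have hK0 : volume (dint K) ≠ 0 := by
    rw [volume_dint]; exact (ENNReal.ofReal_pos.2 (dlen_pos K)).ne'
  have hKt : volume (dint K) ≠ ⊤ := by rw [volume_dint]; exact ENNReal.ofReal_ne_top
  have hwt : volume (dint K ∩ unionBD ℬ I₀) ≠ ⊤ :=
    ne_top_of_le_ne_top hKt (measure_mono Set.inter_subset_left)
  rw [ENNReal.le_div_iff_mul_le (.inl hK0) (.inl hKt), ← ENNReal.div_eq_inv_mul,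
    ← ENNReal.mul_div_right_comm, ENNReal.div_le_iff_le_mul (.inr hwt) (.inl hκ),
    ← ENNReal.mul_div_right_comm, ENNReal.div_le_iff_le_mul (.inl (h.volume_unionBD_ne_zero hI))
      (.inl (h.volume_unionBD_ne_top hI))] at hJ4
  calc _ ≤ _ := hJ4
    _ = _ := by ring

lemma Bop_apply_of_mem {a : Dy → ℝ} {I K : Dy} (hI : I ∈ ℐ) (hK : K ∈ ℬ I) :
    Bop ℐ ℬ a K = a I :=
  tsum_eq_single (⟨I, hI, hK⟩ : {I : Dy // I ∈ ℐ ∧ K ∈ ℬ I})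
    (fun J hJ => absurd (Subtype.ext (h.eq_of_mem_of_mem J.2.1 hI J.2.2 hK)) hJ)

lemma Qop_apply_of_mem {a : Dy → ℝ} {I : Dy} (hI : I ∈ ℐ) :
    Qop ℐ ℬ a I = (∑ K ∈ h.blocks I, a K * dlen K) / ∑ K ∈ h.blocks I, dlen K := by
  rw [Qop, Set.indicator_of_mem hI, ← h.coe_blocks hI, Finset.tsum_subtype' _ fun K => a K * dlen K,
    Finset.tsum_subtype']

lemma Qop_Bop_apply {a : Dy → ℝ} {I : Dy} (hI : I ∈ ℐ) : Qop ℐ ℬ (Bop ℐ ℬ a) I = a I := by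
  have hB : ∀ K ∈ h.blocks I, Bop ℐ ℬ a K = a I := fun K hK =>
    h.Bop_apply_of_mem hI (by rwa [← Finset.mem_coe, h.coe_blocks hI] at hK)
  rw [h.Qop_apply_of_mem hI, Finset.sum_congr rfl fun K hK => by rw [hB K hK], ← Finset.mul_sum,
    mul_div_cancel_right₀ _ (h.sum_dlen_pos hI).ne']

lemma Qop_Bop_eq_self {a : Dy → ℝ} (ha : ∀ I ∉ ℐ, a I = 0) : Qop ℐ ℬ (Bop ℐ ℬ a) = a := by
  funext I
  by_cases hI : I ∈ ℐ
  · exact h.Qop_Bop_apply hI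
  · rw [Qop_apply_of_notMem hI, ha I hI]

lemma sqFn_Bop_le (c : Dy → ℝ) (x : ℝ) : sqFn (Bop ℐ ℬ c) x ≤ slNorm c ^ 2 := by
  obtain ⟨ℐf, hℐf⟩ : ∃ s : Finset Dy, (s : Set Dy) = ℐ := ⟨_, h.finite_index.coe_toFinset⟩
  have hsplit : sqFn (Bop ℐ ℬ c) x
      = ∑ I ∈ ℐf, (unionBD ℬ I).indicator (fun _ => ENNReal.ofReal (c I ^ 2)) x := by
    rw [sqFn, tsum_eq_sum (s := ℐf.biUnion h.blocks) fun K hK => by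
        rw [Bop_apply_of_forall_notMem fun I hI hKI => hK <| Finset.mem_biUnion.2
          ⟨I, by rwa [← Finset.mem_coe, hℐf], by rwa [← Finset.mem_coe, h.coe_blocks hI]⟩]
        simp,
      Finset.sum_biUnion (hℐf ▸ h.pairwiseDisjoint_blocks)]
    refine Finset.sum_congr rfl fun I hI => ?_
    have hI' : I ∈ ℐ := hℐf ▸ Finset.mem_coe.2 hI
    rw [h.unionBD_eq hI', Finset.indicator_biUnion_apply _ _ (h.pairwiseDisjoint_dint hI')]
    refine Finset.sum_congr rfl fun K hK => ?_
    rw [h.Bop_apply_of_mem hI' (by rwa [← Finset.mem_coe, h.coe_blocks hI'] at hK)]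
  have hchain : ∀ I ∈ ℐf.filter (x ∈ unionBD ℬ ·), ∀ J ∈ ℐf.filter (x ∈ unionBD ℬ ·),
      ¬Disjoint (dint I) (dint J) := by
    obtain ⟨-, -, -, -, hJ3, -⟩ := h
    intro I hI J hJ hIJ
    rw [Finset.mem_filter, ← Finset.mem_coe, hℐf] at hI hJ
    exact Set.disjoint_left.1 (hJ3 I hI.1 J hJ.1 hIJ) hI.2 hJ.2
  rw [hsplit]
  simp only [Set.indicator_apply, ← Finset.sum_filter]
  exact sum_ofReal_sq_le_slNorm_sq c _ hchain

lemma slNorm_Bop_le (c : Dy → ℝ) : slNorm (Bop ℐ ℬ c) ≤ slNorm c :=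
  slNorm_le_iff.2 (h.sqFn_Bop_le c)

lemma volume_mul_Qop_sq_le (hκ : κ ≠ ⊤) (a : Dy → ℝ) {I₀ I : Dy} (hI₀ : I₀ ∈ ℐ) (hI : I ∈ ℐ)
    (hsub : dint I₀ ⊆ dint I) :
    volume (unionBD ℬ I₀) * ENNReal.ofReal (Qop ℐ ℬ a I ^ 2)
      ≤ κ * ∑ K ∈ h.blocks I, ENNReal.ofReal (a K ^ 2) * volume (dint K ∩ unionBD ℬ I₀) := by
  have hmean : ENNReal.ofReal (Qop ℐ ℬ a I ^ 2) * volume (unionBD ℬ I)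
      ≤ ∑ K ∈ h.blocks I, ENNReal.ofReal (a K ^ 2) * volume (dint K) := by
    simp only [h.Qop_apply_of_mem hI, h.volume_unionBD hI, volume_dint,
      ← ENNReal.ofReal_mul (sq_nonneg _)]
    rw [← ENNReal.ofReal_sum_of_nonneg fun K _ => mul_nonneg (sq_nonneg _) (dlen_pos K).le]
    exact ENNReal.ofReal_le_ofReal (sq_div_sum_mul_sum_le _ _ _ fun K _ => dlen_pos K)
  rw [← ENNReal.mul_le_mul_iff_right (h.volume_unionBD_ne_zero hI) (h.volume_unionBD_ne_top hI)]
  calc volume (unionBD ℬ I) * (volume (unionBD ℬ I₀) * ENNReal.ofReal (Qop ℐ ℬ a I ^ 2))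
      = volume (unionBD ℬ I₀) * (ENNReal.ofReal (Qop ℐ ℬ a I ^ 2) * volume (unionBD ℬ I)) := by
        ring
    _ ≤ volume (unionBD ℬ I₀) * ∑ K ∈ h.blocks I, ENNReal.ofReal (a K ^ 2) * volume (dint K) := by
        gcongr
    _ = ∑ K ∈ h.blocks I, ENNReal.ofReal (a K ^ 2) * (volume (unionBD ℬ I₀) * volume (dint K)) := by
        rw [Finset.mul_sum]
        exact Finset.sum_congr rfl fun K _ => by ring
    _ ≤ ∑ K ∈ h.blocks I, ENNReal.ofReal (a K ^ 2)
          * (κ * volume (unionBD ℬ I) * volume (dint K ∩ unionBD ℬ I₀)) := by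
        refine Finset.sum_le_sum fun K hK => mul_le_mul_right ?_ _
        exact h.volume_mul_volume_le hκ hI₀ hI hsub (by rwa [← h.coe_blocks hI])
    _ = volume (unionBD ℬ I)
          * (κ * ∑ K ∈ h.blocks I, ENNReal.ofReal (a K ^ 2) * volume (dint K ∩ unionBD ℬ I₀)) := by
        rw [Finset.mul_sum, Finset.mul_sum]
        exact Finset.sum_congr rfl fun K _ => by ring

lemma sqFn_Qop_le (hκ : κ ≠ ⊤) (a : Dy → ℝ) (x : ℝ) :
    sqFn (Qop ℐ ℬ a) x ≤ κ * slNorm a ^ 2 := by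
  obtain ⟨ℐf, hℐf⟩ : ∃ s : Finset Dy, (s : Set Dy) = ℐ := ⟨_, h.finite_index.coe_toFinset⟩
  rw [sqFn_eq_sum _ ℐf fun I hI => Qop_apply_of_notMem (by rwa [← hℐf])]
  set D := ℐf.filter (x ∈ dint ·)
  rcases D.eq_empty_or_nonempty with hD | hD
  · simp [hD]
  have hDℐ : ∀ I ∈ D, I ∈ ℐ := fun I hI => hℐf ▸ Finset.mem_coe.2 (Finset.mem_filter.1 hI).1
  obtain ⟨I₀, hI₀, hmin⟩ := exists_dint_subset_of_not_disjoint D hD fun I hI J hJ =>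
    Set.not_disjoint_iff.2 ⟨x, (Finset.mem_filter.1 hI).2, (Finset.mem_filter.1 hJ).2⟩
  set U := unionBD ℬ I₀
  rw [← ENNReal.mul_le_mul_iff_right (h.volume_unionBD_ne_zero (hDℐ I₀ hI₀))
    (h.volume_unionBD_ne_top (hDℐ I₀ hI₀))]
  calc volume U * ∑ I ∈ D, ENNReal.ofReal (Qop ℐ ℬ a I ^ 2)
      = ∑ I ∈ D, volume U * ENNReal.ofReal (Qop ℐ ℬ a I ^ 2) := Finset.mul_sum _ _ _
    _ ≤ ∑ I ∈ D, κ * ∑ K ∈ h.blocks I, ENNReal.ofReal (a K ^ 2) * volume (dint K ∩ U) := by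
        refine Finset.sum_le_sum fun I hI => ?_
        exact h.volume_mul_Qop_sq_le hκ a (hDℐ I₀ hI₀) (hDℐ I hI) (hmin I hI)
    _ = κ * ∑ K ∈ D.biUnion h.blocks, ENNReal.ofReal (a K ^ 2) * volume (dint K ∩ U) := by
        rw [← Finset.mul_sum, Finset.sum_biUnion (h.pairwiseDisjoint_blocks.subset hDℐ)]
    _ ≤ κ * (slNorm a ^ 2 * volume U) := by
        gcongr
        exact sum_ofReal_sq_mul_volume_inter_le a _ U
    _ = volume U * (κ * slNorm a ^ 2) := by ring

lemma slNorm_Qop_le (a : Dy → ℝ) : slNorm (Qop ℐ ℬ a) ≤ κ ^ (1 / 2 : ℝ) * slNorm a := by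
  rcases eq_or_ne κ ⊤ with rfl | hκ
  · rcases eq_or_ne (slNorm a) 0 with ha | ha
    · obtain rfl := eq_zero_of_slNorm_eq_zero ha
      have hQ : Qop ℐ ℬ 0 = 0 := by funext I; simp [Qop]
      simp [hQ, ha]
    · rw [ENNReal.top_rpow_of_pos (by norm_num), ENNReal.top_mul ha]
      exact le_top
  rw [slNorm_le_iff]
  intro x
  rw [mul_pow, ← ENNReal.rpow_natCast, ← ENNReal.rpow_mul]
  norm_num
  exact h.sqFn_Qop_le hκ a x

end JonesD

/-- under Jones' conditions, Q ∘ B is the identity on SL^∞ (on the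
coefficients indexed by ℐ); consequently P = B ∘ Q is a bounded projection of norm
at most κ^{1/2}, the range of B is complemented, and B is an isomorphism onto its
range (it is bounded below on series supported on ℐ). -/
theorem Qop_Bop_eq_id (κ : ℝ≥0∞) (ℐ : Set Dy) (ℬ : Dy → Set Dy)
    (h : JonesD κ ℐ ℬ) :
    (∀ a : Dy → ℝ, ∀ I ∈ ℐ, Qop ℐ ℬ (Bop ℐ ℬ a) I = a I) ∧
    (∀ a : Dy → ℝ,
      Bop ℐ ℬ (Qop ℐ ℬ (Bop ℐ ℬ (Qop ℐ ℬ a))) = Bop ℐ ℬ (Qop ℐ ℬ a)) ∧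
    (∀ a : Dy → ℝ,
      slNorm (Bop ℐ ℬ (Qop ℐ ℬ a)) ≤ κ ^ (1 / 2 : ℝ) * slNorm a) ∧
    (∀ a : Dy → ℝ, (∀ I ∉ ℐ, a I = 0) →
      slNorm a ≤ κ ^ (1 / 2 : ℝ) * slNorm (Bop ℐ ℬ a)) := by
  refine ⟨fun a I hI => h.Qop_Bop_apply hI, fun a => ?_, fun a => ?_, fun a ha => ?_⟩
  · rw [h.Qop_Bop_eq_self fun I hI => JonesD.Qop_apply_of_notMem hI]
  · exact (h.slNorm_Bop_le _).trans (h.slNorm_Qop_le a)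
  · calc slNorm a = slNorm (Qop ℐ ℬ (Bop ℐ ℬ a)) := by rw [h.Qop_Bop_eq_self ha]
      _ ≤ κ ^ (1 / 2 : ℝ) * slNorm (Bop ℐ ℬ a) := h.slNorm_Qop_le _
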